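/- If Q ∈ B^q is a generalized symmetry of the passive orthonomic system (𝔇_{J^α} Q^{i^α} = 𝔭𝔯_Q P^α for all α), then [𝔇_M, 𝔭𝔯_Q] P^α = 0 for all α and all multi-indices M ∈ ℕ^p, and consequently [𝔇_j, 𝔭𝔯_Q] = 0 for all j = 1,...,p. -/

import Mathlib

/-!
Under orthonomy and passivity the reduction `Q ↦ Q̃` modulo the differential ideal is the algebra
homomorphism `normalForm`, which replaces every principal derivative, recursively along the
ranking, by the corresponding derivative of a right-hand side. On `B` the commutator
`[𝔇_j, 𝔭𝔯_Q]` obeys the Leibniz rule, so it vanishes once it vanishes on the parametric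
generators `u^l_K`. There it equals `𝔇_{K+j} Q^l - 𝔭𝔯_Q ũ^l_{K+j}`: this is zero when `u^l_{K+j}`
is parametric, and when `u^l_{K+j} = u^{i^β}_{J^β L}` the symmetry condition turns it into
`[𝔇_L, 𝔭𝔯_Q] P^β`. Induction along the ranking of `(i^α, J^α M)`, using `𝔇_{M+j} = 𝔇_j 𝔇_M`, gives
`[𝔇_M, 𝔭𝔯_Q] P^α = 0`, and the same generator computation then gives `[𝔇_j, 𝔭𝔯_Q] = 0` on `B`.
-/

open MvPolynomial

/-- Jet variables: the independent variables `x i` and the derivatives `u^α_K`. -/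
abbrev JetVar (p q : ℕ) := Sum (Fin p) (Fin q × (Fin p →₀ ℕ))

/-- The ring `A` of differential (polynomial) functions on the jet manifold. -/
abbrev JetRing (p q : ℕ) := MvPolynomial (JetVar p q) ℚ

/-- The total differential operator `D_i = ∂/∂x_i + Σ_{α,K} u^α_{Ki} ∂/∂u^α_K`. -/
noncomputable def totalD (p q : ℕ) (i : Fin p) :
    Derivation ℚ (JetRing p q) (JetRing p q) :=
  MvPolynomial.mkDerivation ℚ (fun v => match v with
    | Sum.inl j => if i = j then 1 else 0
    | Sum.inr (α, K) => X (Sum.inr (α, K + Finsupp.single i 1)))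

/-- The multi total differential operator `D_K = D_1^{K_1} ∘ ⋯ ∘ D_p^{K_p}`. -/
noncomputable def DmultiK (p q : ℕ) (K : Fin p →₀ ℕ) :
    Module.End ℚ (JetRing p q) :=
  (List.finRange p).foldr (fun i f => ((totalD p q i).toLinearMap ^ (K i)) * f) 1

/-- A system of PDEs `u^{i^α}_{J^α} = P^α` together with a ranking `rk` on
`ℕ_q × ℕ^p`: a total order which is positive and compatible with addition,
and with all `J^α ≠ 0`. -/
structure OrthoSystem (p q n : ℕ) where
  ii : Fin n → Fin q
  JJ : Fin n → (Fin p →₀ ℕ)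
  P : Fin n → JetRing p q
  rk : (Fin q × (Fin p →₀ ℕ)) → (Fin q × (Fin p →₀ ℕ)) → Prop
  rk_refl : ∀ a, rk a a
  rk_total : ∀ a b, rk a b ∨ rk b a
  rk_antisymm : ∀ a b, rk a b → rk b a → a = b
  rk_trans : ∀ a b c, rk a b → rk b c → rk a c
  rk_pos : ∀ (j : Fin q) (K L : Fin p →₀ ℕ), rk (j, K) (j, K + L)
  rk_compat : ∀ (i j : Fin q) (J K L : Fin p →₀ ℕ),
    rk (i, J) (j, K) ↔ rk (i, J + L) (j, K + L)
  J_ne : ∀ α, JJ α ≠ 0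

variable {p q n : ℕ}

/-- The strict part of the ranking. -/
def OrthoSystem.rlt (S : OrthoSystem p q n) (a b : Fin q × (Fin p →₀ ℕ)) : Prop :=
  S.rk a b ∧ a ≠ b

/-- A derivative `u^j_K` is principal if `(j,K) = (i^α, J^α L)` for some `α, L`. -/
def OrthoSystem.principal (S : OrthoSystem p q n) (v : Fin q × (Fin p →₀ ℕ)) : Prop :=
  ∃ (α : Fin n) (L : Fin p →₀ ℕ), v = (S.ii α, S.JJ α + L)

/-- `Q` belongs to the subring `B` of functions of parametric derivatives only. -/
def OrthoSystem.inB (S : OrthoSystem p q n) (Q : JetRing p q) : Prop :=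
  ∀ (jK : Fin q × (Fin p →₀ ℕ)), Sum.inr jK ∈ Q.vars → ¬ S.principal jK

/-- Orthonomy: `P^α` depends only on parametric derivatives `u^j_K` with
`(j,K) < (i^α, J^α)`. -/
def OrthoSystem.orthonomic (S : OrthoSystem p q n) : Prop :=
  ∀ (α : Fin n) (jK : Fin q × (Fin p →₀ ℕ)), Sum.inr jK ∈ (S.P α).vars →
    ¬ S.principal jK ∧ S.rlt jK (S.ii α, S.JJ α)

/-- Passivity: `(i^α, J^α K) = (i^β, J^β L)` implies `D_K P^α = D_L P^β`. -/
def OrthoSystem.passive (S : OrthoSystem p q n) : Prop :=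
  ∀ (α β : Fin n) (K L : Fin p →₀ ℕ),
    (S.ii α, S.JJ α + K) = (S.ii β, S.JJ β + L) →
    DmultiK p q K (S.P α) = DmultiK p q L (S.P β)

/-- The differential ideal generated by the `Δ^α = u^{i^α}_{J^α} − P^α`. -/
noncomputable def OrthoSystem.diffIdeal (S : OrthoSystem p q n) : Ideal (JetRing p q) :=
  Ideal.span { x | ∃ (α : Fin n) (L : Fin p →₀ ℕ),
    x = DmultiK p q L (X (Sum.inr (S.ii α, S.JJ α)) - S.P α) }

open Classical in
/-- The reduction `Q ↦ Q̃`: the element of `B` congruent to `Q` modulo the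
differential ideal generated by `Δ` (when it exists). -/
noncomputable def OrthoSystem.red (S : OrthoSystem p q n) (Q : JetRing p q) :
    JetRing p q :=
  if h : ∃ R, S.inB R ∧ Q - R ∈ S.diffIdeal then h.choose else 0

/-- The intrinsic multi-differential operator `𝔇_K P = (D_K P)~`. -/
noncomputable def OrthoSystem.dfrakK (S : OrthoSystem p q n) (K : Fin p →₀ ℕ)
    (Q : JetRing p q) : JetRing p q :=
  S.red (DmultiK p q K Q)

/-- The intrinsic total differential operator `𝔇_j P = (D_j P)~`. -/
noncomputable def OrthoSystem.dfrak (S : OrthoSystem p q n) (j : Fin p)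
    (Q : JetRing p q) : JetRing p q :=
  S.red (totalD p q j Q)

open Classical in
/-- The intrinsic prolongation `𝔭𝔯_Q = Σ_{(j,K)∈S} (𝔇_K Q^j) ∂/∂u^j_K`. -/
noncomputable def OrthoSystem.iprolong (S : OrthoSystem p q n)
    (Q : Fin q → JetRing p q) : Derivation ℚ (JetRing p q) (JetRing p q) :=
  MvPolynomial.mkDerivation ℚ (fun v => match v with
    | Sum.inl _ => 0
    | Sum.inr (j, K) => if S.principal (j, K) then 0 else S.dfrakK K (Q j))

namespace MvPolynomial

variable {R σ τ : Type*} [CommRing R] {s t : Set σ}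

theorem aeval_eqOn_supported {A : Type*} [CommRing A] [Algebra R A] {g₁ g₂ : σ → A}
    (h : Set.EqOn g₁ g₂ s) :
    Set.EqOn (aeval g₁) (aeval g₂) (supported R s : Set (MvPolynomial σ R)) := by
  refine AlgHom.eqOn_adjoin_iff.mpr ?_
  rintro _ ⟨i, hi, rfl⟩
  simpa using h hi

theorem aeval_mem_supported {t : Set τ} {g : σ → MvPolynomial τ R}
    (h : ∀ i ∈ s, g i ∈ supported R t) {f : MvPolynomial σ R} (hf : f ∈ supported R s) :
    aeval g f ∈ supported R t := by
  have : supported R s ≤ (supported R t).comap (aeval g) :=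
    Algebra.adjoin_le <| by rintro _ ⟨i, hi, rfl⟩; simpa using h i hi
  exact this hf

theorem derivation_mem_supported (D : Derivation R (MvPolynomial σ R) (MvPolynomial σ R))
    (hst : s ⊆ t) (h : ∀ i ∈ s, D (X i) ∈ supported R t) {f : MvPolynomial σ R}
    (hf : f ∈ supported R s) : D f ∈ supported R t := by
  induction hf using Algebra.adjoin_induction with
  | mem x hx => obtain ⟨i, hi, rfl⟩ := hx; exact h i hi
  | algebraMap r => rw [D.map_algebraMap]; exact zero_mem _
  | add x y _ _ hx hy => rw [map_add]; exact add_mem hx hy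
  | mul x y hx' hy' hx hy =>
    rw [Derivation.leibniz, smul_eq_mul, smul_eq_mul]
    exact add_mem (mul_mem (supported_mono hst hx') hy) (mul_mem (supported_mono hst hy') hx)

theorem sub_aeval_mem {g : σ → MvPolynomial σ R} {I : Ideal (MvPolynomial σ R)}
    (h : ∀ i, X i - g i ∈ I) (f : MvPolynomial σ R) : f - aeval g f ∈ I := by
  have : (Ideal.Quotient.mkₐ R I).comp (aeval g) = Ideal.Quotient.mkₐ R I :=
    algHom_ext fun i => by simpa using (Ideal.Quotient.eq.mpr (h i)).symm
  rw [← Ideal.Quotient.eq]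
  simpa using (DFunLike.congr_fun this f).symm

theorem eq_zero_of_leibniz_of_mem_supported (E : MvPolynomial σ R →ₗ[R] MvPolynomial σ R)
    (hmul : ∀ x ∈ supported R s, ∀ y ∈ supported R s, E (x * y) = x * E y + y * E x)
    (hX : ∀ i ∈ s, E (X i) = 0) {f : MvPolynomial σ R} (hf : f ∈ supported R s) : E f = 0 := by
  have hone : E 1 = 0 := by simpa using hmul 1 (one_mem _) 1 (one_mem _)
  induction hf using Algebra.adjoin_induction with
  | mem x hx => obtain ⟨i, hi, rfl⟩ := hx; exact hX i hi
  | algebraMap r => rw [Algebra.algebraMap_eq_smul_one, map_smul, hone, smul_zero]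
  | add x y _ _ hx hy => rw [map_add, hx, hy, add_zero]
  | mul x y hx' hy' hx hy => rw [hmul x hx' y hy', hx, hy, mul_zero, mul_zero, add_zero]

end MvPolynomial

namespace Finsupp

variable {ι : Type*}

theorem exists_eq_add_single_one {M : ι →₀ ℕ} (hM : M ≠ 0) :
    ∃ j M', M = M' + single j 1 := by
  obtain ⟨j, hj⟩ := support_nonempty_iff.mpr hM
  refine ⟨j, M - single j 1, (tsub_add_cancel_of_le ?_).symm⟩
  exact single_le_iff.mpr (Nat.one_le_iff_ne_zero.mpr (mem_support_iff.mp hj))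

theorem induction_add_single_one {motive : (ι →₀ ℕ) → Prop} (zero : motive 0)
    (step : ∀ M j, motive M → motive (M + single j 1)) (M : ι →₀ ℕ) : motive M := by
  induction M using WellFoundedLT.induction with
  | ind M ih =>
    rcases eq_or_ne M 0 with rfl | hM
    · exact zero
    obtain ⟨j, M', rfl⟩ := exists_eq_add_single_one hM
    have hpos : 0 < single j 1 := pos_iff_ne_zero.mpr (single_ne_zero.mpr one_ne_zero)
    exact step M' j (ih M' (lt_add_of_pos_right M' hpos))

end Finsupp

namespace List

variable {M ι : Type*} [Monoid M] (T : ι → M)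

theorem commute_foldr_pow_mul {x : M} (hx : ∀ i, Commute x (T i)) (K : ι → ℕ) (l : List ι) :
    Commute x (l.foldr (fun i f => T i ^ K i * f) 1) := by
  induction l with
  | nil => exact Commute.one_right x
  | cons a l ih => exact ((hx a).pow_right _).mul_right ih

theorem foldr_pow_add_mul (hT : ∀ i j, Commute (T i) (T j)) (K L : ι → ℕ) (l : List ι) :
    l.foldr (fun i f => T i ^ (K i + L i) * f) 1 =
      l.foldr (fun i f => T i ^ K i * f) 1 * l.foldr (fun i f => T i ^ L i * f) 1 := by
  induction l with
  | nil => simp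
  | cons a l ih =>
    have hcomm := commute_foldr_pow_mul T (fun j => (hT a j).pow_left (L a)) K l
    rw [foldr_cons, foldr_cons, foldr_cons, ih, pow_add, mul_assoc, mul_assoc]
    congr 1
    rw [← mul_assoc, hcomm.eq, mul_assoc]

theorem foldr_pow_mul_eq_one {K : ι → ℕ} {l : List ι} (hK : ∀ i ∈ l, K i = 0) :
    l.foldr (fun i f => T i ^ K i * f) 1 = 1 := by
  induction l with
  | nil => rfl
  | cons a l ih =>
    rw [foldr_cons, hK a mem_cons_self, pow_zero, one_mul]
    exact ih fun i hi => hK i (mem_cons_of_mem a hi)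

theorem foldr_pow_mul_eq_of_nodup {K : ι → ℕ} {l : List ι} {j : ι} (hl : l.Nodup) (hj : j ∈ l)
    (hKj : K j = 1) (hK : ∀ i ≠ j, K i = 0) : l.foldr (fun i f => T i ^ K i * f) 1 = T j := by
  induction l with
  | nil => exact absurd hj not_mem_nil
  | cons a l ih =>
    rw [foldr_cons]
    obtain ⟨ha, hl⟩ := nodup_cons.mp hl
    rcases eq_or_ne a j with rfl | haj
    · rw [foldr_pow_mul_eq_one T fun i hi => hK i (ne_of_mem_of_not_mem hi ha), hKj, pow_one,
        mul_one]
    · rw [hK a haj, pow_zero, one_mul]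
      exact ih hl ((mem_cons.mp hj).resolve_left haj.symm)

end List

@[simp] theorem totalD_X_inl (i j : Fin p) :
    totalD p q i (X (Sum.inl j)) = if i = j then 1 else 0 :=
  mkDerivation_X _ _ _

@[simp] theorem totalD_X_inr (i : Fin p) (l : Fin q) (K : Fin p →₀ ℕ) :
    totalD p q i (X (Sum.inr (l, K))) = X (Sum.inr (l, K + Finsupp.single i 1)) :=
  mkDerivation_X _ _ _

theorem totalD_commute (i j : Fin p) :
    Commute (totalD p q i).toLinearMap (totalD p q j).toLinearMap := by
  have h : ⁅totalD p q i, totalD p q j⁆ = 0 := derivation_ext fun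
    | Sum.inl k => by simp only [Derivation.commutator_apply, totalD_X_inl]; split_ifs <;> simp
    | Sum.inr (l, K) => by simp [Derivation.commutator_apply, add_right_comm]
  exact LinearMap.ext fun f =>
    sub_eq_zero.mp (by simpa [Derivation.commutator_apply] using congr($h f))

theorem DmultiK_add (K L : Fin p →₀ ℕ) :
    DmultiK p q (K + L) = DmultiK p q K * DmultiK p q L :=
  List.foldr_pow_add_mul _ totalD_commute K L _

theorem DmultiK_zero : DmultiK p q 0 = 1 :=
  List.foldr_pow_mul_eq_one _ fun _ _ => rfl

theorem DmultiK_single_one (j : Fin p) :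
    DmultiK p q (Finsupp.single j 1) = (totalD p q j).toLinearMap :=
  List.foldr_pow_mul_eq_of_nodup _ (List.nodup_finRange p) (List.mem_finRange j)
    Finsupp.single_eq_same fun _ hi => Finsupp.single_eq_of_ne hi

theorem DmultiK_add_single_one_apply (M : Fin p →₀ ℕ) (j : Fin p) (f : JetRing p q) :
    DmultiK p q (M + Finsupp.single j 1) f = totalD p q j (DmultiK p q M f) := by
  rw [add_comm, DmultiK_add, DmultiK_single_one]
  rfl

theorem DmultiK_X_inr (M : Fin p →₀ ℕ) (l : Fin q) (K : Fin p →₀ ℕ) :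
    DmultiK p q M (X (Sum.inr (l, K))) = X (Sum.inr (l, K + M)) := by
  induction M using Finsupp.induction_add_single_one with
  | zero => simp [DmultiK_zero]
  | step M j ih => rw [DmultiK_add_single_one_apply, ih, totalD_X_inr, add_assoc]

def jetVarsIn (c : Set (Fin q × (Fin p →₀ ℕ))) : Set (JetVar p q) :=
  Set.range Sum.inl ∪ Sum.inr '' c

@[simp] theorem inl_mem_jetVarsIn {c : Set (Fin q × (Fin p →₀ ℕ))} (i : Fin p) :
    Sum.inl i ∈ jetVarsIn c := by
  simp [jetVarsIn]

@[simp] theorem inr_mem_jetVarsIn {c : Set (Fin q × (Fin p →₀ ℕ))} {u : Fin q × (Fin p →₀ ℕ)} :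
    Sum.inr u ∈ jetVarsIn c ↔ u ∈ c := by
  simp [jetVarsIn]

theorem jetVarsIn_mono {c c' : Set (Fin q × (Fin p →₀ ℕ))} (h : c ⊆ c') :
    jetVarsIn c ⊆ jetVarsIn c' :=
  Set.union_subset_union_right _ (Set.image_mono h)

namespace OrthoSystem

variable (S : OrthoSystem p q n)

def parametric : Set (Fin q × (Fin p →₀ ℕ)) := {u | ¬ S.principal u}

def rankLT (v : Fin q × (Fin p →₀ ℕ)) : Set (Fin q × (Fin p →₀ ℕ)) := {u | S.rlt u v}

theorem inB_iff_mem_supported {f : JetRing p q} :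
    S.inB f ↔ f ∈ supported ℚ (jetVarsIn S.parametric) := by
  rw [mem_supported]
  refine ⟨fun h w hw => ?_, fun h u hu => inr_mem_jetVarsIn.mp (h hu)⟩
  rcases w with i | u
  exacts [inl_mem_jetVarsIn i, inr_mem_jetVarsIn.mpr (h u hw)]

variable {S}

theorem rlt_of_rk_of_rlt {a b c} (hab : S.rk a b) (hbc : S.rlt b c) : S.rlt a c :=
  ⟨S.rk_trans _ _ _ hab hbc.1, by rintro rfl; exact hbc.2 (S.rk_antisymm _ _ hbc.1 hab)⟩

theorem rlt_of_rlt_of_rk {a b c} (hab : S.rlt a b) (hbc : S.rk b c) : S.rlt a c :=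
  ⟨S.rk_trans _ _ _ hab.1 hbc, by rintro rfl; exact hab.2 (S.rk_antisymm _ _ hab.1 hbc)⟩

theorem rlt_trans {a b c} (hab : S.rlt a b) (hbc : S.rlt b c) : S.rlt a c :=
  rlt_of_rk_of_rlt hab.1 hbc

theorem rankLT_mono {v w : Fin q × (Fin p →₀ ℕ)} (h : S.rk v w) : S.rankLT v ⊆ S.rankLT w :=
  fun _ hu => rlt_of_rlt_of_rk hu h

theorem rlt_add_right {i j : Fin q} {J K : Fin p →₀ ℕ} (L : Fin p →₀ ℕ)
    (h : S.rlt (i, J) (j, K)) : S.rlt (i, J + L) (j, K + L) :=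
  ⟨(S.rk_compat i j J K L).mp h.1, fun he => h.2 (by simpa using he)⟩

theorem rlt_add_single_one (j : Fin q) (K : Fin p →₀ ℕ) (i : Fin p) :
    S.rlt (j, K) (j, K + Finsupp.single i 1) :=
  ⟨S.rk_pos j K _, by simp⟩

variable (S)

theorem rlt_wf : WellFounded S.rlt := by
  -- `rk` contains the relation "same `j`, `K ≤ K'`", a well-quasi-order by Dickson's lemma.
  have : IsPreorder _ S.rk := { refl := S.rk_refl, trans := S.rk_trans }
  have hwqo : WellQuasiOrdered S.rk := fun f => by
    obtain ⟨a, b, hab, hj, hK⟩ :=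
      ((Finite.wellQuasiOrdered (· = ·)).prod wellQuasiOrdered_le) f
    obtain ⟨L, hL⟩ := le_iff_exists_add.mp hK
    refine ⟨a, b, hab, ?_⟩
    rw [show f b = ((f a).1, (f a).2 + L) from Prod.ext hj.symm hL]
    exact S.rk_pos _ _ _
  exact Subrelation.wf (fun h => ⟨h.1, fun h' => h.2 (S.rk_antisymm _ _ h.1 h')⟩)
    hwqo.wellFounded

theorem totalD_mem_supported_rankLT (j : Fin p) {l : Fin q} {K : Fin p →₀ ℕ}
    {f : JetRing p q} (hf : f ∈ supported ℚ (jetVarsIn (S.rankLT (l, K)))) :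
    totalD p q j f ∈ supported ℚ (jetVarsIn (S.rankLT (l, K + Finsupp.single j 1))) := by
  refine derivation_mem_supported _ (jetVarsIn_mono (rankLT_mono (S.rk_pos _ _ _)))
    (fun w hw => ?_) hf
  rcases w with i | ⟨l', K'⟩
  · rw [totalD_X_inl]
    split_ifs
    exacts [one_mem _, zero_mem _]
  · rw [totalD_X_inr, X_mem_supported, inr_mem_jetVarsIn]
    exact rlt_add_right _ (inr_mem_jetVarsIn.mp hw)

theorem DmultiK_mem_supported_rankLT (M : Fin p →₀ ℕ) {l : Fin q} {K : Fin p →₀ ℕ}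
    {f : JetRing p q} (hf : f ∈ supported ℚ (jetVarsIn (S.rankLT (l, K)))) :
    DmultiK p q M f ∈ supported ℚ (jetVarsIn (S.rankLT (l, K + M))) := by
  induction M using Finsupp.induction_add_single_one with
  | zero => simpa [DmultiK_zero] using hf
  | step M j ih =>
    rw [DmultiK_add_single_one_apply, ← add_assoc]
    exact S.totalD_mem_supported_rankLT j ih

variable {S}

theorem P_mem_supported_parametric (hS : S.orthonomic) (α : Fin n) :
    S.P α ∈ supported ℚ (jetVarsIn S.parametric) :=
  (S.inB_iff_mem_supported).mp fun u hu => (hS α u hu).1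

theorem DmultiK_P_mem_supported_rankLT (hS : S.orthonomic) (α : Fin n) (M : Fin p →₀ ℕ) :
    DmultiK p q M (S.P α) ∈ supported ℚ (jetVarsIn (S.rankLT (S.ii α, S.JJ α + M))) := by
  refine S.DmultiK_mem_supported_rankLT M (mem_supported.mpr fun w hw => ?_)
  rcases w with i | u
  exacts [inl_mem_jetVarsIn i, inr_mem_jetVarsIn.mpr (hS α u hw).2]

theorem DmultiK_choose_mem_supported_rankLT (hS : S.orthonomic) {v : Fin q × (Fin p →₀ ℕ)}
    (hv : S.principal v) :
    DmultiK p q hv.choose_spec.choose (S.P hv.choose) ∈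
      supported ℚ (jetVarsIn (S.rankLT v)) := by
  have h := DmultiK_P_mem_supported_rankLT hS hv.choose hv.choose_spec.choose
  rwa [← hv.choose_spec.choose_spec] at h

variable (S)

open Classical in
/-- The reduction `u^v ↦ ũ^v` of a single derivative: for principal `v = (i^α, J^α + L)`, with a
chosen representation, it is `D_L P^α` with its lower-ranked derivatives already reduced. By
passivity the choice does not matter (`normalFormVar_eq`). -/
noncomputable def normalFormVar : (Fin q × (Fin p →₀ ℕ)) → JetRing p q :=
  S.rlt_wf.fix fun v normalFormVar_lt =>
    if h : S.principal v then
      aeval (Sum.elim (fun i => X (Sum.inl i))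
          fun u => if hu : S.rlt u v then normalFormVar_lt u hu else X (Sum.inr u))
        (DmultiK p q h.choose_spec.choose (S.P h.choose))
    else X (Sum.inr v)

noncomputable def normalForm : JetRing p q →ₐ[ℚ] JetRing p q :=
  aeval (Sum.elim (fun i => X (Sum.inl i)) S.normalFormVar)

@[simp] theorem normalForm_X_inr (u : Fin q × (Fin p →₀ ℕ)) :
    S.normalForm (X (Sum.inr u)) = S.normalFormVar u :=
  aeval_X _ _

theorem normalFormVar_of_not_principal {v : Fin q × (Fin p →₀ ℕ)} (hv : ¬ S.principal v) :
    S.normalFormVar v = X (Sum.inr v) := by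
  rw [normalFormVar, WellFounded.fix_eq, dif_neg hv]

open Classical in
theorem normalFormVar_of_principal_eq_aeval {v : Fin q × (Fin p →₀ ℕ)} (hv : S.principal v) :
    S.normalFormVar v =
      aeval (Sum.elim (fun i => X (Sum.inl i))
          fun u => if S.rlt u v then S.normalFormVar u else X (Sum.inr u))
        (DmultiK p q hv.choose_spec.choose (S.P hv.choose)) := by
  rw [normalFormVar, WellFounded.fix_eq, dif_pos hv]
  rfl

theorem X_sub_normalFormVar_mem (v : Fin q × (Fin p →₀ ℕ)) :
    X (Sum.inr v) - S.normalFormVar v ∈ S.diffIdeal := by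
  induction v using S.rlt_wf.induction with
  | _ v ih =>
  by_cases hv : S.principal v
  · classical
    rw [S.normalFormVar_of_principal_eq_aeval hv]
    set α := hv.choose
    set L := hv.choose_spec.choose
    have hvα : v = (S.ii α, S.JJ α + L) := hv.choose_spec.choose_spec
    set f := DmultiK p q L (S.P α)
    have hgen : X (Sum.inr v) - f ∈ S.diffIdeal := by
      refine Ideal.subset_span ⟨α, L, ?_⟩
      rw [map_sub, DmultiK_X_inr, ← hvα]
    rw [← sub_add_sub_cancel _ f]
    refine add_mem hgen (sub_aeval_mem (fun w => ?_) f)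
    rcases w with i | u
    · simp
    · simp only [Sum.elim_inr]
      split_ifs with hu
      · exact ih u hu
      · rw [sub_self]
        exact zero_mem _
  · rw [S.normalFormVar_of_not_principal hv, sub_self]
    exact zero_mem _

variable {S}

theorem normalFormVar_of_principal (hS : S.orthonomic) {v : Fin q × (Fin p →₀ ℕ)}
    (hv : S.principal v) :
    S.normalFormVar v = S.normalForm (DmultiK p q hv.choose_spec.choose (S.P hv.choose)) := by
  classical
  rw [S.normalFormVar_of_principal_eq_aeval hv]
  refine aeval_eqOn_supported (fun w hw => ?_) (DmultiK_choose_mem_supported_rankLT hS hv)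
  rcases w with i | u
  · rfl
  · exact if_pos (inr_mem_jetVarsIn.mp hw)

theorem normalFormVar_eq (hS : S.orthonomic) (hpass : S.passive) {α : Fin n}
    {L : Fin p →₀ ℕ} :
    S.normalFormVar (S.ii α, S.JJ α + L) = S.normalForm (DmultiK p q L (S.P α)) := by
  have hv : S.principal (S.ii α, S.JJ α + L) := ⟨α, L, rfl⟩
  rw [normalFormVar_of_principal hS hv, hpass _ _ _ _ hv.choose_spec.choose_spec.symm]

theorem normalFormVar_mem_supported (hS : S.orthonomic) {c : Set (Fin q × (Fin p →₀ ℕ))}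
    (hc : ∀ u v, S.rlt u v → v ∈ c → u ∈ c) {v : Fin q × (Fin p →₀ ℕ)} (hv : v ∈ c) :
    S.normalFormVar v ∈ supported ℚ (jetVarsIn (S.parametric ∩ c)) := by
  induction v using S.rlt_wf.induction with
  | _ v ih =>
  by_cases hp : S.principal v
  · rw [normalFormVar_of_principal hS hp]
    refine aeval_mem_supported (fun w hw => ?_) (DmultiK_choose_mem_supported_rankLT hS hp)
    rcases w with i | u
    · simp
    · have hu : S.rlt u v := inr_mem_jetVarsIn.mp hw
      exact ih u hu (hc u v hu hv)
  · rw [S.normalFormVar_of_not_principal hp, X_mem_supported, inr_mem_jetVarsIn]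
    exact ⟨hp, hv⟩

theorem normalForm_mem_supported (hS : S.orthonomic) {c : Set (Fin q × (Fin p →₀ ℕ))}
    (hc : ∀ u v, S.rlt u v → v ∈ c → u ∈ c) {f : JetRing p q}
    (hf : f ∈ supported ℚ (jetVarsIn c)) :
    S.normalForm f ∈ supported ℚ (jetVarsIn (S.parametric ∩ c)) := by
  refine aeval_mem_supported (fun w hw => ?_) hf
  rcases w with i | u
  · simp
  · exact normalFormVar_mem_supported hS hc (inr_mem_jetVarsIn.mp hw)

theorem normalForm_mem_supported_parametric (hS : S.orthonomic) (f : JetRing p q) :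
    S.normalForm f ∈ supported ℚ (jetVarsIn S.parametric) := by
  simpa using normalForm_mem_supported hS (c := Set.univ) (by simp)
    (mem_supported.mpr fun w _ => by rcases w with i | u <;> simp)

theorem normalForm_mem_supported_rankLT (hS : S.orthonomic) {v : Fin q × (Fin p →₀ ℕ)}
    {f : JetRing p q} (hf : f ∈ supported ℚ (jetVarsIn (S.rankLT v))) :
    S.normalForm f ∈ supported ℚ (jetVarsIn (S.parametric ∩ S.rankLT v)) :=
  normalForm_mem_supported hS (fun _ _ huv hv => rlt_trans huv hv) hf

variable (S)

theorem normalForm_eq_self {f : JetRing p q} (hf : f ∈ supported ℚ (jetVarsIn S.parametric)) :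
    S.normalForm f = f := by
  refine (aeval_eqOn_supported (fun w hw => ?_) hf).trans (aeval_X_left_apply f)
  rcases w with i | u
  · rfl
  · exact S.normalFormVar_of_not_principal (inr_mem_jetVarsIn.mp hw)

theorem sub_normalForm_mem (f : JetRing p q) : f - S.normalForm f ∈ S.diffIdeal := by
  refine sub_aeval_mem (fun w => ?_) f
  rcases w with i | u
  · simp
  · exact S.X_sub_normalFormVar_mem u

variable {S}

theorem normalForm_eq_zero_of_mem (hS : S.orthonomic) (hpass : S.passive) {f : JetRing p q}
    (hf : f ∈ S.diffIdeal) : S.normalForm f = 0 := by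
  refine (Ideal.span_le.mpr ?_ : S.diffIdeal ≤ RingHom.ker S.normalForm) hf
  rintro _ ⟨α, L, rfl⟩
  rw [SetLike.mem_coe, RingHom.mem_ker, map_sub, map_sub, DmultiK_X_inr, normalForm_X_inr,
    normalFormVar_eq hS hpass, sub_self]

theorem red_eq_normalForm (hS : S.orthonomic) (hpass : S.passive) (f : JetRing p q) :
    S.red f = S.normalForm f := by
  have hex : ∃ R, S.inB R ∧ f - R ∈ S.diffIdeal :=
    ⟨S.normalForm f, S.inB_iff_mem_supported.mpr (normalForm_mem_supported_parametric hS f),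
      S.sub_normalForm_mem f⟩
  obtain ⟨hB, hmem⟩ := hex.choose_spec
  have h := normalForm_eq_zero_of_mem hS hpass hmem
  rw [map_sub, S.normalForm_eq_self (S.inB_iff_mem_supported.mp hB), sub_eq_zero] at h
  rw [red, dif_pos hex, h]

theorem normalForm_map_normalForm (hS : S.orthonomic) (hpass : S.passive)
    {T : JetRing p q →ₗ[ℚ] JetRing p q} (hT : ∀ x ∈ S.diffIdeal, T x ∈ S.diffIdeal)
    (f : JetRing p q) : S.normalForm (T (S.normalForm f)) = S.normalForm (T f) := by
  have h := normalForm_eq_zero_of_mem hS hpass (hT _ (S.sub_normalForm_mem f))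
  rw [map_sub, map_sub, sub_eq_zero] at h
  exact h.symm

variable (S)

theorem totalD_mem_diffIdeal (j : Fin p) {f : JetRing p q} (hf : f ∈ S.diffIdeal) :
    totalD p q j f ∈ S.diffIdeal := by
  induction hf using Submodule.span_induction with
  | mem x hx =>
    obtain ⟨α, L, rfl⟩ := hx
    rw [← DmultiK_add_single_one_apply]
    exact Ideal.subset_span ⟨α, _, rfl⟩
  | zero => simp
  | add x y _ _ hx hy => rw [map_add]; exact add_mem hx hy
  | smul a x hx' hx =>
    rw [smul_eq_mul, Derivation.leibniz, smul_eq_mul, smul_eq_mul]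
    exact add_mem (Ideal.mul_mem_left _ _ hx) (Ideal.mul_mem_right _ _ hx')

theorem DmultiK_mem_diffIdeal (M : Fin p →₀ ℕ) {f : JetRing p q} (hf : f ∈ S.diffIdeal) :
    DmultiK p q M f ∈ S.diffIdeal := by
  induction M using Finsupp.induction_add_single_one with
  | zero => simpa [DmultiK_zero] using hf
  | step M j ih => rw [DmultiK_add_single_one_apply]; exact S.totalD_mem_diffIdeal j ih

variable {S}

theorem normalForm_totalD_normalForm (hS : S.orthonomic) (hpass : S.passive) (j : Fin p)
    (f : JetRing p q) :
    S.normalForm (totalD p q j (S.normalForm f)) = S.normalForm (totalD p q j f) :=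
  normalForm_map_normalForm hS hpass (T := (totalD p q j).toLinearMap)
    (fun _ => S.totalD_mem_diffIdeal j) f

theorem normalForm_DmultiK_normalForm (hS : S.orthonomic) (hpass : S.passive)
    (M : Fin p →₀ ℕ) (f : JetRing p q) :
    S.normalForm (DmultiK p q M (S.normalForm f)) = S.normalForm (DmultiK p q M f) :=
  normalForm_map_normalForm hS hpass (fun _ => S.DmultiK_mem_diffIdeal M) f

theorem dfrakK_eq (hS : S.orthonomic) (hpass : S.passive) (K : Fin p →₀ ℕ) (f : JetRing p q) :
    S.dfrakK K f = S.normalForm (DmultiK p q K f) :=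
  red_eq_normalForm hS hpass _

theorem dfrak_eq (hS : S.orthonomic) (hpass : S.passive) (j : Fin p) (f : JetRing p q) :
    S.dfrak j f = S.normalForm (totalD p q j f) :=
  red_eq_normalForm hS hpass _

variable (S) (Q : Fin q → JetRing p q)

@[simp] theorem iprolong_X_inl (i : Fin p) : S.iprolong Q (X (Sum.inl i)) = 0 :=
  mkDerivation_X _ _ _

theorem iprolong_X_inr_of_not_principal {l : Fin q} {K : Fin p →₀ ℕ}
    (h : ¬ S.principal (l, K)) : S.iprolong Q (X (Sum.inr (l, K))) = S.dfrakK K (Q l) := by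
  classical
  rw [iprolong, mkDerivation_X]
  exact if_neg h

variable {S}

theorem iprolong_mem_supported_parametric (hS : S.orthonomic) (hpass : S.passive)
    {f : JetRing p q} (hf : f ∈ supported ℚ (jetVarsIn S.parametric)) :
    S.iprolong Q f ∈ supported ℚ (jetVarsIn S.parametric) := by
  refine derivation_mem_supported _ subset_rfl (fun w hw => ?_) hf
  rcases w with i | ⟨l, K⟩
  · simp
  · rw [S.iprolong_X_inr_of_not_principal Q (inr_mem_jetVarsIn.mp hw), dfrakK_eq hS hpass]
    exact normalForm_mem_supported_parametric hS _

variable (S)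

/-- The commutator `[𝔇_j, 𝔭𝔯_Q]`, with `𝔇_j` realised as `normalForm ∘ D_j`. -/
noncomputable def prolongCommutator (j : Fin p) : JetRing p q →ₗ[ℚ] JetRing p q :=
  S.normalForm.toLinearMap ∘ₗ (totalD p q j).toLinearMap ∘ₗ (S.iprolong Q).toLinearMap -
    (S.iprolong Q).toLinearMap ∘ₗ S.normalForm.toLinearMap ∘ₗ (totalD p q j).toLinearMap

theorem prolongCommutator_apply (j : Fin p) (f : JetRing p q) :
    S.prolongCommutator Q j f = S.normalForm (totalD p q j (S.iprolong Q f)) -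
      S.iprolong Q (S.normalForm (totalD p q j f)) :=
  rfl

variable {S}

theorem prolongCommutator_mul (hS : S.orthonomic) (hpass : S.passive) (j : Fin p)
    {x y : JetRing p q} (hx : x ∈ supported ℚ (jetVarsIn S.parametric))
    (hy : y ∈ supported ℚ (jetVarsIn S.parametric)) :
    S.prolongCommutator Q j (x * y) =
      x * S.prolongCommutator Q j y + y * S.prolongCommutator Q j x := by
  have hpx := iprolong_mem_supported_parametric Q hS hpass hx
  have hpy := iprolong_mem_supported_parametric Q hS hpass hy
  simp only [prolongCommutator_apply, Derivation.leibniz, smul_eq_mul, map_add, map_mul,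
    S.normalForm_eq_self hx, S.normalForm_eq_self hy, S.normalForm_eq_self hpx,
    S.normalForm_eq_self hpy]
  ring

theorem prolongCommutator_eq_zero (hS : S.orthonomic) (hpass : S.passive) (j : Fin p)
    {c : Set (Fin q × (Fin p →₀ ℕ))} (hc : c ⊆ S.parametric)
    (hX : ∀ u ∈ c, S.prolongCommutator Q j (X (Sum.inr u)) = 0) {f : JetRing p q}
    (hf : f ∈ supported ℚ (jetVarsIn c)) : S.prolongCommutator Q j f = 0 := by
  have hB := supported_mono (R := ℚ) (jetVarsIn_mono hc)
  refine eq_zero_of_leibniz_of_mem_supported _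
    (fun x hx y hy => prolongCommutator_mul Q hS hpass j (hB hx) (hB hy)) (fun w hw => ?_) hf
  rcases w with i | u
  · rw [prolongCommutator_apply, iprolong_X_inl, totalD_X_inl]
    split_ifs <;> simp
  · exact hX u (inr_mem_jetVarsIn.mp hw)

theorem prolongCommutator_X_eq_zero (hS : S.orthonomic) (hpass : S.passive)
    (hsym : ∀ α : Fin n, S.dfrakK (S.JJ α) (Q (S.ii α)) = S.iprolong Q (S.P α)) (j : Fin p)
    {l : Fin q} {K : Fin p →₀ ℕ} (hu : ¬ S.principal (l, K))
    (hP : ∀ (β : Fin n) (L : Fin p →₀ ℕ), (S.ii β, S.JJ β + L) = (l, K + Finsupp.single j 1) →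
      S.normalForm (DmultiK p q L (S.iprolong Q (S.P β))) =
        S.iprolong Q (S.normalForm (DmultiK p q L (S.P β)))) :
    S.prolongCommutator Q j (X (Sum.inr (l, K))) = 0 := by
  rw [prolongCommutator_apply, sub_eq_zero, S.iprolong_X_inr_of_not_principal Q hu,
    dfrakK_eq hS hpass, normalForm_totalD_normalForm hS hpass, ← DmultiK_add_single_one_apply,
    totalD_X_inr, normalForm_X_inr]
  by_cases hv : S.principal (l, K + Finsupp.single j 1)
  · obtain ⟨β, L, hβ⟩ := hv
    obtain ⟨rfl, hK⟩ := Prod.mk.inj hβ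
    rw [hK, normalFormVar_eq hS hpass, add_comm, DmultiK_add, Module.End.mul_apply,
      ← normalForm_DmultiK_normalForm hS hpass, ← dfrakK_eq hS hpass (S.JJ β), hsym]
    exact hP β L hβ.symm
  · rw [S.normalFormVar_of_not_principal hv, S.iprolong_X_inr_of_not_principal Q hv,
      dfrakK_eq hS hpass]

theorem normalForm_DmultiK_iprolong_P (hS : S.orthonomic) (hpass : S.passive)
    (hsym : ∀ α : Fin n, S.dfrakK (S.JJ α) (Q (S.ii α)) = S.iprolong Q (S.P α))
    (α : Fin n) (M : Fin p →₀ ℕ) :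
    S.normalForm (DmultiK p q M (S.iprolong Q (S.P α))) =
      S.iprolong Q (S.normalForm (DmultiK p q M (S.P α))) := by
  suffices h : ∀ v, ∀ (α : Fin n) (M : Fin p →₀ ℕ), v = (S.ii α, S.JJ α + M) →
      S.normalForm (DmultiK p q M (S.iprolong Q (S.P α))) =
        S.iprolong Q (S.normalForm (DmultiK p q M (S.P α))) from h _ α M rfl
  intro v
  induction v using S.rlt_wf.induction with
  | _ v ih =>
  rintro α M rfl
  rcases eq_or_ne M 0 with rfl | hM
  · have hPα := P_mem_supported_parametric hS α
    simp only [DmultiK_zero, Module.End.one_apply, S.normalForm_eq_self hPα,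
      S.normalForm_eq_self (iprolong_mem_supported_parametric Q hS hpass hPα)]
  obtain ⟨j, M, rfl⟩ := Finsupp.exists_eq_add_single_one hM
  have hlt : S.rlt (S.ii α, S.JJ α + M) (S.ii α, S.JJ α + (M + Finsupp.single j 1)) := by
    rw [← add_assoc]
    exact rlt_add_single_one _ _ _
  set g := S.normalForm (DmultiK p q M (S.P α))
  have hg := normalForm_mem_supported_rankLT hS (DmultiK_P_mem_supported_rankLT hS α M)
  have hcomm : S.prolongCommutator Q j g = 0 := by
    refine prolongCommutator_eq_zero Q hS hpass j Set.inter_subset_left (fun ⟨l, K⟩ hu => ?_) hg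
    refine prolongCommutator_X_eq_zero Q hS hpass hsym j hu.1 fun β L hβ => ih _ ?_ β L rfl
    rw [hβ, ← add_assoc]
    exact rlt_add_right _ hu.2
  rw [prolongCommutator_apply, sub_eq_zero, normalForm_totalD_normalForm hS hpass] at hcomm
  rw [DmultiK_add_single_one_apply, DmultiK_add_single_one_apply,
    ← normalForm_totalD_normalForm hS hpass, ih _ hlt α M rfl, hcomm]

end OrthoSystem

theorem symmetry_implies_commute_general (S : OrthoSystem p q n)
    (hS : S.orthonomic) (hpass : S.passive)
    (Q : Fin q → JetRing p q)
    (hsym : ∀ α : Fin n, S.dfrakK (S.JJ α) (Q (S.ii α)) = S.iprolong Q (S.P α)) :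
    (∀ (α : Fin n) (M : Fin p →₀ ℕ),
      S.dfrakK M (S.iprolong Q (S.P α)) = S.iprolong Q (S.dfrakK M (S.P α))) ∧
    (∀ (j : Fin p) (P' : JetRing p q), S.inB P' →
      S.dfrak j (S.iprolong Q P') = S.iprolong Q (S.dfrak j P')) := by
  have hP := OrthoSystem.normalForm_DmultiK_iprolong_P Q hS hpass hsym
  refine ⟨fun α M => ?_, fun j P' hP' => ?_⟩
  · rw [S.dfrakK_eq hS hpass, S.dfrakK_eq hS hpass]
    exact hP α M
  · have hcomm := OrthoSystem.prolongCommutator_eq_zero Q hS hpass j subset_rfl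
      (fun ⟨_, _⟩ hu => OrthoSystem.prolongCommutator_X_eq_zero Q hS hpass hsym j hu
        fun β L _ => hP β L)
      (S.inB_iff_mem_supported.mp hP')
    rwa [OrthoSystem.prolongCommutator_apply, sub_eq_zero, ← S.dfrak_eq hS hpass,
      ← S.dfrak_eq hS hpass] at hcomm

/-- If `Q ∈ B^q` is a generalized symmetry of the passive orthonomic system
(`𝔇_{J^α} Q^{i^α} = 𝔭𝔯_Q P^α` for all `α`), then `[𝔇_M, 𝔭𝔯_Q] P^α = 0` for all
`α` and all multi-indices `M`, and consequently `[𝔇_j, 𝔭𝔯_Q] = 0` on `B` for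
all `j`. -/
theorem symmetry_implies_commute (S : OrthoSystem p q n)
    (hS : S.orthonomic) (hpass : S.passive)
    (Q : Fin q → JetRing p q) (hQ : ∀ j, S.inB (Q j))
    (hsym : ∀ α : Fin n, S.dfrakK (S.JJ α) (Q (S.ii α)) = S.iprolong Q (S.P α)) :
    (∀ (α : Fin n) (M : Fin p →₀ ℕ),
      S.dfrakK M (S.iprolong Q (S.P α)) = S.iprolong Q (S.dfrakK M (S.P α))) ∧
    (∀ (j : Fin p) (P' : JetRing p q), S.inB P' →
      S.dfrak j (S.iprolong Q P') = S.iprolong Q (S.dfrak j P')) :=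
  symmetry_implies_commute_general S hS hpass Q hsym
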